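/- Let f : S → ℝ be a bounded function on closed counterclockwise arcs of S¹ with f(degenerate arc) = 0, satisfying the superadditivity-type condition f(arc(x₁,x₃)) + f(arc(x₂,x₄)) ≥ f(arc(x₁,x₄)) + f(arc(x₂,x₃)) for all x₁,x₂,x₃,x₄ in counterclockwise order. Suppose k ≥ 2 divides n, f is invariant under rotation by 2π/k, and there exists an n-element tiling X of S¹ attaining Mₙ = Σ_{S∈X} f(S). Then there exists an n-element tiling X' of S¹ with k-fold rotational symmetry such that Mₙ = Σ_{S∈X'} f(S). -/

import Mathlib

/-!
Lift tilings of the circle to periodic monotone sequences `g : ℕ → ℝ` with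
`g (i + n) = g i + 2π`. Rotating an optimal tiling by `n / k` cells and by the angle `2π / k`
gives, by the symmetry of `f`, another optimal tiling. The crossing inequality for `f` gives
`Σ(g) + Σ(g') ≤ Σ(min g g') + Σ(max g g')`; since neither term on the right exceeds `Mₙ`, the
pointwise minimum of two optimal tilings is optimal. Hence the pointwise minimum of the `k`
rotations of an optimal tiling is optimal, and it is `k`-fold symmetric because rotation
permutes the `k` rotations cyclically.
-/

open Finset

/-- `Mseq f n` : the supremum of `∑ f(arcs)` over tilings of the circle by `n` arcs,
where arcs are parametrized by pairs of angles and a tiling by `n` arcs corresponds to a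
monotone sequence of `n+1` angles starting at some `x 0` and ending at `x 0 + 2π`. -/
noncomputable def Mseq (f : ℝ → ℝ → ℝ) (n : ℕ) : ℝ :=
  sSup {s | ∃ x : Fin (n + 1) → ℝ, Monotone x ∧ x (Fin.last n) = x 0 + 2 * Real.pi ∧
    s = ∑ i : Fin n, f (x i.castSucc) (x i.succ)}

open Function Real

def IsPeriodicTiling (n : ℕ) (g : ℕ → ℝ) : Prop :=
  Monotone g ∧ ∀ i, g (i + n) = g i + 2 * π

def tilingSum (f : ℝ → ℝ → ℝ) (n : ℕ) (g : ℕ → ℝ) : ℝ :=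
  ∑ i ∈ range n, f (g i) (g (i + 1))

theorem Function.Periodic.sum_range_add {M : Type*} [AddCancelCommMonoid M] {h : ℕ → M}
    {n : ℕ} (hh : Periodic h n) (m : ℕ) : ∑ i ∈ range n, h (i + m) = ∑ i ∈ range n, h i := by
  induction m with
  | zero => rfl
  | succ m ih =>
    have hsplit := (sum_range_succ (fun i => h (i + m)) n).symm.trans
      (sum_range_succ' (fun i => h (i + m)) n)
    rw [Nat.add_comm n m, hh m, zero_add] at hsplit
    rw [← ih, add_right_cancel hsplit]
    exact sum_congr rfl fun i _ => by rw [add_right_comm, add_assoc]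

theorem Function.Periodic.inf'_univ_fin_add_one {α : Type*} [SemilatticeInf α]
    {k : ℕ} [NeZero k] {h : ℕ → α} (hh : Periodic h k) :
    univ.inf' univ_nonempty (fun j : Fin k => h (j + 1)) =
      univ.inf' univ_nonempty (fun j : Fin k => h j) := by
  have hrot : (fun j : Fin k => h (j + 1)) =
      (fun j : Fin k => h j) ∘ (Equiv.addRight 1).toEmbedding := by
    funext j
    rw [comp_apply, Equiv.coe_toEmbedding, Equiv.coe_addRight, Fin.val_add, Fin.val_one',
      Nat.add_mod_mod, hh.map_mod_nat]
  rw [hrot, inf'_comp_eq_map _ univ_nonempty]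
  exact inf'_congr _ (univ_map_equiv_to_embedding _) fun _ _ => rfl

namespace IsPeriodicTiling

variable {n : ℕ} {g g' : ℕ → ℝ}

theorem ne_zero (hg : IsPeriodicTiling n g) : n ≠ 0 := by
  rintro rfl
  linarith [hg.2 0, pi_pos]

theorem succ_le_add_two_pi (hg : IsPeriodicTiling n g) (i : ℕ) : g (i + 1) ≤ g i + 2 * π :=
  hg.2 i ▸ hg.1 (Nat.add_le_add_left (Nat.one_le_iff_ne_zero.2 hg.ne_zero) i)

theorem restrict (hg : IsPeriodicTiling n g) :
    Monotone (fun i : Fin (n + 1) => g i) ∧ g (Fin.last n) = g (0 : Fin (n + 1)) + 2 * π :=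
  ⟨fun _ _ h => hg.1 h, by simpa using hg.2 0⟩

theorem shift (hg : IsPeriodicTiling n g) (m : ℕ) (c : ℝ) :
    IsPeriodicTiling n (fun i => g (i + m) - c) :=
  ⟨fun _ _ h => sub_le_sub_right (hg.1 (Nat.add_le_add_right h m)) c,
    fun i => by simp only [Nat.add_right_comm i n m, hg.2]; ring⟩

protected theorem min (hg : IsPeriodicTiling n g) (hg' : IsPeriodicTiling n g') :
    IsPeriodicTiling n (fun i => min (g i) (g' i)) :=
  ⟨hg.1.min hg'.1, fun i => by simp only [hg.2, hg'.2, min_add_add_right]⟩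

protected theorem max (hg : IsPeriodicTiling n g) (hg' : IsPeriodicTiling n g') :
    IsPeriodicTiling n (fun i => max (g i) (g' i)) :=
  ⟨hg.1.max hg'.1, fun i => by simp only [hg.2, hg'.2, max_add_add_right]⟩

end IsPeriodicTiling

theorem sum_fin_eq_tilingSum (f : ℝ → ℝ → ℝ) (n : ℕ) (g : ℕ → ℝ) :
    ∑ i : Fin n, f (g i.castSucc) (g i.succ) = tilingSum f n g := by
  simp only [Fin.val_castSucc, Fin.val_succ]
  exact Fin.sum_univ_eq_sum_range (fun i => f (g i) (g (i + 1))) n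

theorem tilingSum_le_Mseq {f : ℝ → ℝ → ℝ} {B : ℝ}
    (hB : ∀ a b : ℝ, a ≤ b → b ≤ a + 2 * π → |f a b| ≤ B) {n : ℕ} {g : ℕ → ℝ}
    (hg : IsPeriodicTiling n g) : tilingSum f n g ≤ Mseq f n := by
  refine le_csSup ⟨n * B, ?_⟩ ⟨fun i => g i, hg.restrict.1, hg.restrict.2,
    (sum_fin_eq_tilingSum f n g).symm⟩
  rintro s ⟨x, hx, hclosed, rfl⟩
  calc ∑ i : Fin n, f (x i.castSucc) (x i.succ) ≤ ∑ _i : Fin n, B := by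
        refine sum_le_sum fun i _ => (le_abs_self _).trans (hB _ _ ?_ ?_)
        · exact hx (Fin.castSucc_le_succ i)
        · linarith [hx (Fin.le_last i.succ), hx (Fin.zero_le i.castSucc)]
    _ = n * B := by simp

theorem tilingSum_shift {f : ℝ → ℝ → ℝ} {c : ℝ} (hc : ∀ a b : ℝ, f (a - c) (b - c) = f a b)
    (hper : ∀ a b : ℝ, f (a + 2 * π) (b + 2 * π) = f a b) {n : ℕ} {g : ℕ → ℝ}
    (hg : IsPeriodicTiling n g) (m : ℕ) :
    tilingSum f n (fun i => g (i + m) - c) = tilingSum f n g := by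
  have hperiodic : Periodic (fun i => f (g i) (g (i + 1))) n := fun i => by
    simp only [Nat.add_right_comm i n 1, hg.2, hper]
  calc tilingSum f n (fun i => g (i + m) - c)
      = ∑ i ∈ range n, f (g (i + m)) (g (i + m + 1)) :=
        sum_congr rfl fun i _ => by simp only [Nat.add_right_comm i 1 m, hc]
    _ = tilingSum f n g := hperiodic.sum_range_add m

section Submodularity

variable {f : ℝ → ℝ → ℝ}
  (hineq : ∀ a b c d : ℝ, a ≤ b → b ≤ c → c ≤ d → d ≤ a + 2 * π →
    f a d + f b c ≤ f a c + f b d)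
include hineq

theorem add_le_min_add_max {a b a' b' : ℝ} (hab : a ≤ b) (hba : b ≤ a + 2 * π) (hab' : a' ≤ b')
    (hba' : b' ≤ a' + 2 * π) :
    f a b + f a' b' ≤ f (min a a') (min b b') + f (max a a') (max b b') := by
  rcases le_total a a' with ha | ha <;> rcases le_total b b' with hb | hb
  · simp only [min_eq_left ha, min_eq_left hb, max_eq_right ha, max_eq_right hb, le_refl]
  · simpa only [min_eq_left ha, min_eq_right hb, max_eq_right ha, max_eq_left hb]
      using hineq a a' b' b ha hab' hb hba
  · simpa only [min_eq_right ha, min_eq_left hb, max_eq_left ha, max_eq_right hb, add_comm]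
      using hineq a' a b b' ha hab hb hba'
  · simp only [min_eq_right ha, min_eq_right hb, max_eq_left ha, max_eq_left hb, add_comm, le_refl]

theorem tilingSum_add_le_min_add_max {n : ℕ} {g g' : ℕ → ℝ} (hg : IsPeriodicTiling n g)
    (hg' : IsPeriodicTiling n g') :
    tilingSum f n g + tilingSum f n g' ≤
      tilingSum f n (fun i => min (g i) (g' i)) + tilingSum f n (fun i => max (g i) (g' i)) := by
  simp only [tilingSum, ← sum_add_distrib]
  exact sum_le_sum fun i _ => add_le_min_add_max hineq (hg.1 i.le_succ)
    (hg.succ_le_add_two_pi i) (hg'.1 i.le_succ) (hg'.succ_le_add_two_pi i)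

end Submodularity

def IsOptimalTiling (f : ℝ → ℝ → ℝ) (n : ℕ) (g : ℕ → ℝ) : Prop :=
  IsPeriodicTiling n g ∧ tilingSum f n g = Mseq f n

namespace IsOptimalTiling

variable {f : ℝ → ℝ → ℝ} {B : ℝ} (hB : ∀ a b : ℝ, a ≤ b → b ≤ a + 2 * π → |f a b| ≤ B)
  (hineq : ∀ a b c d : ℝ, a ≤ b → b ≤ c → c ≤ d → d ≤ a + 2 * π →
    f a d + f b c ≤ f a c + f b d)
  {n : ℕ}
include hB hineq

protected theorem min {g g' : ℕ → ℝ} (hg : IsOptimalTiling f n g) (hg' : IsOptimalTiling f n g') :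
    IsOptimalTiling f n (fun i => min (g i) (g' i)) := by
  have hmin := tilingSum_le_Mseq hB (hg.1.min hg'.1)
  have hmax := tilingSum_le_Mseq hB (hg.1.max hg'.1)
  have hsub := tilingSum_add_le_min_add_max hineq hg.1 hg'.1
  exact ⟨hg.1.min hg'.1, by linarith [hg.2, hg'.2]⟩

theorem finset_inf' {ι : Type*} {s : Finset ι} (hs : s.Nonempty) {G : ι → ℕ → ℝ}
    (hG : ∀ j ∈ s, IsOptimalTiling f n (G j)) :
    IsOptimalTiling f n (fun i => s.inf' hs fun j => G j i) := by
  induction hs using Finset.Nonempty.cons_induction with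
  | singleton j => simpa using hG j (mem_singleton_self j)
  | cons j s hj hs ih =>
    simp only [inf'_cons hs]
    exact (hG j (mem_cons_self j s)).min hB hineq (ih fun l hl => hG l (mem_cons_of_mem hl))

end IsOptimalTiling

section PeriodicExtension

open Fin.NatCast

variable {n : ℕ} [NeZero n]

noncomputable def periodicExtension (x : Fin (n + 1) → ℝ) (i : ℕ) : ℝ :=
  x (Fin.castSucc (i : Fin n)) + (i / n : ℕ) * (2 * π)

variable {x : Fin (n + 1) → ℝ} (hclosed : x (Fin.last n) = x 0 + 2 * π)
include hclosed

theorem periodicExtension_val (i : Fin (n + 1)) : periodicExtension x i = x i := by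
  rcases Fin.eq_castSucc_or_eq_last i with ⟨j, rfl⟩ | rfl
  · simp [periodicExtension, Nat.div_eq_of_lt j.isLt]
  · simp [periodicExtension, hclosed]

theorem isPeriodicTiling_periodicExtension (hmono : Monotone x) :
    IsPeriodicTiling n (periodicExtension x) := by
  refine ⟨monotone_nat_of_le_succ fun i => ?_, fun i => ?_⟩
  · unfold periodicExtension
    by_cases hdvd : n ∣ i + 1
    · rw [Nat.succ_div_of_dvd hdvd, Fin.natCast_eq_zero.2 hdvd]
      have := hmono (Fin.le_last (Fin.castSucc (i : Fin n)))
      push_cast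
      rw [Fin.castSucc_zero]
      linarith
    · have hmod : i % n ≤ (i + 1) % n := by
        have h1 := Nat.mod_add_div i n
        have h2 := Nat.mod_add_div (i + 1) n
        rw [Nat.succ_div_of_not_dvd hdvd] at h2
        omega
      rw [Nat.succ_div_of_not_dvd hdvd]
      gcongr
      exact hmono (by simpa only [Fin.castSucc_le_castSucc_iff, Fin.le_def, Fin.val_natCast])
  · simp only [periodicExtension, Nat.cast_add, Fin.natCast_self, add_zero,
      Nat.add_div_right i (Nat.pos_of_neZero n)]
    push_cast
    ring

end PeriodicExtension

theorem periodic_diagonal {f : ℝ → ℝ → ℝ} {c : ℝ} (hsym : ∀ a b : ℝ, f (a + c) (b + c) = f a b)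
    (a b : ℝ) : Periodic (fun t => f (a + t) (b + t)) c := fun t => by
  simpa only [add_assoc] using hsym (a + t) (b + t)

section Symmetrization

variable (E : ℕ → ℝ) (m : ℕ) (c : ℝ)

def rotatedTiling (j i : ℕ) : ℝ := E (i + j * m) - j * c

noncomputable def symmetrization (k : ℕ) [NeZero k] (i : ℕ) : ℝ :=
  univ.inf' univ_nonempty fun j : Fin k => rotatedTiling E m c j i

variable {E m c} {f : ℝ → ℝ → ℝ} {n k : ℕ}

theorem rotatedTiling_add (j i : ℕ) :
    rotatedTiling E m c j (i + m) = rotatedTiling E m c (j + 1) i + c := by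
  simp only [rotatedTiling]
  rw [show i + m + j * m = i + (j + 1) * m by ring]
  push_cast
  ring

theorem periodic_rotatedTiling (hE : IsPeriodicTiling n E) (hkm : k * m = n)
    (hkc : (k : ℝ) * c = 2 * π) : Periodic (rotatedTiling E m c) k := fun j => funext fun i => by
  simp only [rotatedTiling]
  rw [show i + (j + k) * m = i + j * m + n by rw [← hkm]; ring, hE.2]
  push_cast
  linarith

theorem symmetrization_add [NeZero k] (hE : IsPeriodicTiling n E) (hkm : k * m = n)
    (hkc : (k : ℝ) * c = 2 * π) (i : ℕ) :
    symmetrization E m c k (i + m) = symmetrization E m c k i + c := by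
  have hperiodic : Periodic (fun j => rotatedTiling E m c j i) k := fun j =>
    congrFun (periodic_rotatedTiling hE hkm hkc j) i
  calc symmetrization E m c k (i + m)
      = univ.inf' univ_nonempty (fun j : Fin k => rotatedTiling E m c (j + 1) i) + c := by
        simp only [symmetrization, rotatedTiling_add]
        exact (apply_inf'_eq_inf'_comp _ (· + c) fun a b => (min_add_add_right a b c).symm).symm
    _ = symmetrization E m c k i + c := by rw [hperiodic.inf'_univ_fin_add_one, symmetrization]

theorem isOptimalTiling_rotatedTiling (hsym : ∀ a b : ℝ, f (a + c) (b + c) = f a b)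
    (hkc : (k : ℝ) * c = 2 * π) (hE : IsOptimalTiling f n E) (j : ℕ) :
    IsOptimalTiling f n (rotatedTiling E m c j) := by
  have hjc : ∀ a b : ℝ, f (a - j * c) (b - j * c) = f a b := fun a b => by
    simpa [← sub_eq_add_neg] using ((periodic_diagonal hsym a b).neg_nat_mul j).eq
  have hper : ∀ a b : ℝ, f (a + 2 * π) (b + 2 * π) = f a b := fun a b => by
    simpa [hkc] using (periodic_diagonal hsym a b).nat_mul_eq k
  exact ⟨hE.1.shift _ _, (tilingSum_shift hjc hper hE.1 (j * m)).trans hE.2⟩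

theorem isOptimalTiling_symmetrization [NeZero k] {B : ℝ}
    (hB : ∀ a b : ℝ, a ≤ b → b ≤ a + 2 * π → |f a b| ≤ B)
    (hineq : ∀ a b c d : ℝ, a ≤ b → b ≤ c → c ≤ d → d ≤ a + 2 * π →
      f a d + f b c ≤ f a c + f b d)
    (hsym : ∀ a b : ℝ, f (a + c) (b + c) = f a b) (hkc : (k : ℝ) * c = 2 * π)
    (hE : IsOptimalTiling f n E) : IsOptimalTiling f n (symmetrization E m c k) :=
  IsOptimalTiling.finset_inf' hB hineq univ_nonempty fun j _ =>
    isOptimalTiling_rotatedTiling hsym hkc hE j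

end Symmetrization

theorem stmt2 (f : ℝ → ℝ → ℝ)
    (hbdd : ∃ B : ℝ, ∀ a b : ℝ, a ≤ b → b ≤ a + 2 * Real.pi → |f a b| ≤ B)
    (hineq : ∀ a b c d : ℝ, a ≤ b → b ≤ c → c ≤ d → d ≤ a + 2 * Real.pi →
      f a d + f b c ≤ f a c + f b d)
    (n k : ℕ) (hdvd : k ∣ n)
    -- `f` has `k`-fold rotational symmetry:
    (hsym : ∀ a b : ℝ, f (a + 2 * Real.pi / k) (b + 2 * Real.pi / k) = f a b)
    -- an `n`-element tiling attaining `Mₙ`: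
    (x : Fin (n + 1) → ℝ) (hmono : Monotone x)
    (hclosed : x (Fin.last n) = x 0 + 2 * Real.pi)
    (hmax : Mseq f n = ∑ i : Fin n, f (x i.castSucc) (x i.succ)) :
    -- there is an `n`-element tiling with `k`-fold rotational symmetry attaining `Mₙ`:
    ∃ y : Fin (n + 1) → ℝ, Monotone y ∧ y (Fin.last n) = y 0 + 2 * Real.pi ∧
      (∀ i : Fin (n + 1), ∀ h : (i : ℕ) + n / k ≤ n,
        y ⟨(i : ℕ) + n / k, by omega⟩ = y i + 2 * Real.pi / k) ∧
      Mseq f n = ∑ i : Fin n, f (y i.castSucc) (y i.succ) := by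
  obtain ⟨B, hB⟩ := hbdd
  have hn : n ≠ 0 := by
    rintro rfl
    linarith [pi_pos, show x 0 = x 0 + 2 * π from hclosed]
  have hk : k ≠ 0 := by
    rintro rfl
    exact hn (zero_dvd_iff.1 hdvd)
  have : NeZero n := ⟨hn⟩
  have : NeZero k := ⟨hk⟩
  have hkm : k * (n / k) = n := Nat.mul_div_cancel' hdvd
  have hkc : (k : ℝ) * (2 * π / k) = 2 * π := mul_div_cancel₀ _ (Nat.cast_ne_zero.2 hk)
  have hE : IsOptimalTiling f n (periodicExtension x) := by
    refine ⟨isPeriodicTiling_periodicExtension hclosed hmono, ?_⟩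
    rw [hmax, ← sum_fin_eq_tilingSum]
    simp only [periodicExtension_val hclosed]
  obtain ⟨hq, hqsum⟩ := isOptimalTiling_symmetrization (m := n / k) hB hineq hsym hkc hE
  exact ⟨fun i => symmetrization (periodicExtension x) (n / k) (2 * π / k) k i, hq.restrict.1,
    hq.restrict.2, fun i _ => symmetrization_add hE.1 hkm hkc i,
    by rw [sum_fin_eq_tilingSum, hqsum]⟩
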